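/- The subgroup H = ⟨a⟩_∞ * ⟨b⟩_∞ (free of rank 2) of Ĝ = ⟨a, b, c | [a, cbc⁻¹]⟩ is not verbally closed: there is a word w₂(x₁,x₂,x₃) (a Lee C-test word for F₂) such that the equation w₂(x₁, x₂, [x₁, x₃x₂x₃⁻¹]) = w₂(a, b, 1) has a solution in Ĝ (namely x₁ = a, x₂ = b, x₃ = c) but no solution in H. -/

import Mathlib

open scoped commutatorElement

/-- Relations of the group `Ĝ = ⟨a, b, c ∣ [a, b^c]⟩`. -/
def rels17 : Set (FreeGroup (Fin 3)) :=
  {⁅(FreeGroup.of 0 : FreeGroup (Fin 3)),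
      FreeGroup.of 2 * FreeGroup.of 1 * (FreeGroup.of 2)⁻¹⁆}

/-- The group `Ĝ = ⟨a, b, c ∣ [a, b^c]⟩ ≅ (ℤ × ℤ) * ℤ`. -/
abbrev Ghat17 : Type := PresentedGroup rels17

def a17 : Ghat17 := PresentedGroup.of 0
def b17 : Ghat17 := PresentedGroup.of 1
def c17 : Ghat17 := PresentedGroup.of 2

/-- The subgroup `H = ⟨a⟩_∞ * ⟨b⟩_∞` of `Ĝ`. -/
def Hhat17 : Subgroup Ghat17 := Subgroup.closure {a17, b17}

/-- The value of the word `w₂(x₁, x₂, [x₁, x₂^{x₃}])` in `Ĝ`. -/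
def lhs17 (w₂ : FreeGroup (Fin 3)) (x₁ x₂ x₃ : Ghat17) : Ghat17 :=
  FreeGroup.lift
    (![x₁, x₂, x₁ * (x₃ * x₂ * x₃⁻¹) * x₁⁻¹ * (x₃ * x₂ * x₃⁻¹)⁻¹]) w₂

/-!
Ĝ maps to the holomorph `F₂ ⋊ Aut F₂` by `a ↦ a`, `b ↦ b` and `c ↦` the automorphism swapping
`a` and `b`, which conjugates `b` to `a`; on `H` this map is the identity of `F₂`, so `H` is free
on `a, b`. A solution in `H` therefore gives one in `F₂`. Its right-hand side `w₂(a, b, 1)` is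
nontrivial because `a` and `b` do not commute, so the `C`-test property makes
`(x₁, x₂, [x₁, x₂^{x₃}])` conjugate to `(a, b, 1)`: then `a` commutes with a conjugate of `b`,
which fails already in the image `S₃` of `F₂` where `a` is a transposition and `b` a 3-cycle.
-/

open FreeGroup

theorem FreeGroup.apply_lift {α G K : Type*} [Group G] [Group K] (f : G →* K) (v : α → G)
    (w : FreeGroup α) : f (lift v w) = lift (f ∘ v) w :=
  lift_unique (f.comp (lift v)) (fun _ => by simp)

theorem not_commute_of_zero_conj_of_one (t : FreeGroup (Fin 2)) :
    ¬ Commute (of 0) (t * of 1 * t⁻¹) := by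
  let f : FreeGroup (Fin 2) →* Equiv.Perm (Fin 3) := lift ![Equiv.swap 0 1, finRotate 3]
  have hperm : ∀ u : Equiv.Perm (Fin 3), ¬ Commute (Equiv.swap 0 1) (u * finRotate 3 * u⁻¹) := by
    unfold Commute SemiconjBy
    decide
  intro h
  have hf := h.map f
  rw [_root_.map_mul, _root_.map_mul, _root_.map_inv] at hf
  exact hperm (f t) (by simpa [f] using hf)

theorem not_commute_of_zero_of_one : ¬ Commute (of 0 : FreeGroup (Fin 2)) (of 1) := by
  simpa using not_commute_of_zero_conj_of_one 1

section CTestWord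

variable {w : FreeGroup (Fin 3)}

theorem lift_of_of_one_ne_one
    (hLee : ∀ g : Fin 3 → FreeGroup (Fin 2),
      lift g w = 1 → ∃ z : FreeGroup (Fin 2), Subgroup.closure (Set.range g) ≤ Subgroup.zpowers z) :
    lift ![of 0, of 1, (1 : FreeGroup (Fin 2))] w ≠ 1 := by
  intro h
  obtain ⟨z, hz⟩ := hLee _ h
  obtain ⟨k, hk⟩ := Subgroup.mem_zpowers_iff.1 (hz (Subgroup.subset_closure ⟨0, rfl⟩))
  obtain ⟨l, hl⟩ := Subgroup.mem_zpowers_iff.1 (hz (Subgroup.subset_closure ⟨1, rfl⟩))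
  apply not_commute_of_zero_of_one
  simp only [Matrix.cons_val_zero, Matrix.cons_val_one] at hk hl
  rw [← hk, ← hl]
  exact Commute.zpow_zpow_self z k l

theorem lift_commutator_conj_ne_lift_of_of_one
    (hC : ∀ g g' : Fin 3 → FreeGroup (Fin 2),
      lift g w = lift g' w → lift g w ≠ 1 → ∃ s : FreeGroup (Fin 2), ∀ i, g' i = s * g i * s⁻¹)
    (hne : lift ![of 0, of 1, (1 : FreeGroup (Fin 2))] w ≠ 1) (g₁ g₂ g₃ : FreeGroup (Fin 2)) :
    lift ![g₁, g₂, ⁅g₁, g₃ * g₂ * g₃⁻¹⁆] w ≠ lift ![of 0, of 1, (1 : FreeGroup (Fin 2))] w := by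
  intro h
  obtain ⟨s, hs⟩ := hC _ _ h (h ▸ hne)
  have h₀ : of 0 = s * g₁ * s⁻¹ := hs 0
  have h₁ : of 1 = s * g₂ * s⁻¹ := hs 1
  have h₂ : ⁅g₁, g₃ * g₂ * g₃⁻¹⁆ = 1 := by
    simpa [eq_comm (a := (1 : FreeGroup (Fin 2)))] using hs 2
  have hcomm := ((commutatorElement_eq_one_iff_commute.1 h₂).conj s)
  rw [← h₀, show s * (g₃ * g₂ * g₃⁻¹) * s⁻¹ = s * g₃ * s⁻¹ * (s * g₂ * s⁻¹) * (s * g₃ * s⁻¹)⁻¹ by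
    group, ← h₁] at hcomm
  exact not_commute_of_zero_conj_of_one _ hcomm

end CTestWord

theorem a17_commute_conj_b17 : Commute a17 (c17 * b17 * c17⁻¹) := by
  rw [← commutatorElement_eq_one_iff_commute]
  simpa [commutatorElement_def, a17, b17, c17, PresentedGroup.of] using
    PresentedGroup.one_of_mem (rels := rels17) rfl

open SemidirectProduct in
def ghat17ToHolomorph :
    Ghat17 →* FreeGroup (Fin 2) ⋊[MonoidHom.id _] MulAut (FreeGroup (Fin 2)) :=
  PresentedGroup.toGroup (f := ![inl (of 0), inl (of 1), inr (freeGroupCongr (Equiv.swap 0 1))])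
    (by
      have hconj : inr (freeGroupCongr (Equiv.swap 0 1)) * inl (of 1) *
          (inr (freeGroupCongr (Equiv.swap 0 1)))⁻¹ =
          (inl (of 0) : FreeGroup (Fin 2) ⋊[MonoidHom.id _] MulAut (FreeGroup (Fin 2))) := by
        rw [← _root_.map_inv, ← inl_aut]
        rfl
      rintro _ rfl
      rw [map_commutatorElement]
      simp only [lift_apply_of, _root_.map_mul, _root_.map_inv, Matrix.cons_val_zero,
        Matrix.cons_val_one, Matrix.cons_val_two, Matrix.tail_cons, Matrix.head_cons]
      rw [hconj, commutatorElement_self])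

def freeGroupToGhat17 : FreeGroup (Fin 2) →* Ghat17 := lift ![a17, b17]

theorem ghat17ToHolomorph_comp_freeGroupToGhat17 :
    ghat17ToHolomorph.comp freeGroupToGhat17 = SemidirectProduct.inl := by
  refine FreeGroup.ext_hom _ _ fun i => ?_
  fin_cases i <;> simp [ghat17ToHolomorph, freeGroupToGhat17, a17, b17, PresentedGroup.toGroup.of]

theorem freeGroupToGhat17_injective : Function.Injective freeGroupToGhat17 := by
  refine Function.Injective.of_comp (f := ghat17ToHolomorph) ?_
  rw [← MonoidHom.coe_comp, ghat17ToHolomorph_comp_freeGroupToGhat17]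
  exact SemidirectProduct.inl_injective

theorem range_freeGroupToGhat17 : freeGroupToGhat17.range = Hhat17 := by
  rw [freeGroupToGhat17, range_lift_eq_closure, Matrix.range_cons_cons_empty, Hhat17]

theorem lhs17_freeGroupToGhat17 (w : FreeGroup (Fin 3)) (g₁ g₂ g₃ : FreeGroup (Fin 2)) :
    lhs17 w (freeGroupToGhat17 g₁) (freeGroupToGhat17 g₂) (freeGroupToGhat17 g₃) =
      freeGroupToGhat17 (lift ![g₁, g₂, ⁅g₁, g₃ * g₂ * g₃⁻¹⁆] w) := by
  rw [lhs17, apply_lift]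
  congr 2
  funext i
  fin_cases i <;> simp [commutatorElement_def]

theorem lift_a17_b17_one (w : FreeGroup (Fin 3)) :
    lift ![a17, b17, 1] w = freeGroupToGhat17 (lift ![of 0, of 1, (1 : FreeGroup (Fin 2))] w) := by
  rw [apply_lift]
  congr 2
  funext i
  fin_cases i <;> simp [freeGroupToGhat17]

/-- The subgroup `H = ⟨a⟩_∞ * ⟨b⟩_∞` of `Ĝ = ⟨a, b, c ∣ [a, b^c]⟩` is not verbally
closed: for any Lee `C`-test word `w₂` for `F₂` in three letters, the equation
`w₂(x₁, x₂, [x₁, x₂^{x₃}]) = w₂(a, b, 1)` has the solution `x₁ = a, x₂ = b, x₃ = c`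
in `Ĝ` but no solution in `H`. -/
theorem Hhat17_not_verballyClosed (w₂ : FreeGroup (Fin 3))
    (hC : ∀ g g' : Fin 3 → FreeGroup (Fin 2),
      FreeGroup.lift g w₂ = FreeGroup.lift g' w₂ → FreeGroup.lift g w₂ ≠ 1 →
        ∃ s : FreeGroup (Fin 2), ∀ i, g' i = s * g i * s⁻¹)
    (hLee : ∀ g : Fin 3 → FreeGroup (Fin 2),
      FreeGroup.lift g w₂ = 1 ↔
        ∃ z : FreeGroup (Fin 2), Subgroup.closure (Set.range g) ≤ Subgroup.zpowers z) :
    lhs17 w₂ a17 b17 c17 = FreeGroup.lift (![a17, b17, 1]) w₂ ∧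
    ¬ ∃ x₁ x₂ x₃ : Ghat17, x₁ ∈ Hhat17 ∧ x₂ ∈ Hhat17 ∧ x₃ ∈ Hhat17 ∧
        lhs17 w₂ x₁ x₂ x₃ = FreeGroup.lift (![a17, b17, 1]) w₂ := by
  constructor
  · rw [lhs17, ← commutatorElement_def, commutatorElement_eq_one_iff_commute.2 a17_commute_conj_b17]
  · rintro ⟨x₁, x₂, x₃, h₁, h₂, h₃, heq⟩
    rw [← range_freeGroupToGhat17] at h₁ h₂ h₃
    obtain ⟨g₁, rfl⟩ := h₁
    obtain ⟨g₂, rfl⟩ := h₂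
    obtain ⟨g₃, rfl⟩ := h₃
    rw [lhs17_freeGroupToGhat17, lift_a17_b17_one] at heq
    have hne := lift_of_of_one_ne_one fun g => (hLee g).1
    exact lift_commutator_conj_ne_lift_of_of_one hC hne g₁ g₂ g₃ (freeGroupToGhat17_injective heq)
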